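/- Let q : (K,G) → (L,G) be an open extension of topological dynamical systems. If the uniform enveloping semigroupoid E_u(q) is compact (in the compact-open topology of C_q^q(K,K)), then it is a groupoid: every θ ∈ E_u(q) is a bijection from K_{s(θ)} onto K_{r(θ)} whose inverse θ⁻¹ is a continuous fiber map belonging to E_u(q), and the inversion map E_u(q) → E_u(q), θ ↦ θ⁻¹, is a homeomorphism. -/

import Mathlib

open Filter Topology Set Function MeasureTheory

/-- A continuous fiber map between the fibers of the bundles `p : X → L` and `q : Y → L'`:
an element of `C_p^q(X,Y)` with source `src` and range `rng`. -/
structure FiberMap {X L Y L' : Type} [TopologicalSpace X] [TopologicalSpace Y]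
    (p : X → L) (q : Y → L') where
  src : L
  rng : L'
  toFun : {x : X // p x = src} → Y
  maps_to : ∀ x, q (toFun x) = rng
  continuous_toFun : Continuous toFun

/-- The compact-open topology on `C_p^q(X,Y)`, generated by the sets
`W(C,O) = {θ | θ(C ∩ X_{s(θ)}) ⊆ O}` for `C ⊆ X` compact and `O ⊆ Y` open. -/
def fiberCO {X L Y L' : Type} [TopologicalSpace X] [TopologicalSpace Y]
    (p : X → L) (q : Y → L') : TopologicalSpace (FiberMap p q) :=
  TopologicalSpace.generateFrom
    {W | ∃ (C : Set X) (O : Set Y), IsCompact C ∧ IsOpen O ∧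
      W = {θ : FiberMap p q | ∀ x : {x : X // p x = θ.src}, (x : X) ∈ C → θ.toFun x ∈ O}}

instance fiberMapTopology {X L Y L' : Type} [TopologicalSpace X] [TopologicalSpace Y]
    (p : X → L) (q : Y → L') : TopologicalSpace (FiberMap p q) :=
  fiberCO p q

/-- Composition `η ∘ θ` of continuous fiber maps in `C_q^q(K,K)` with `r(θ) = s(η)`. -/
def FiberMap.comp {K L : Type} [TopologicalSpace K] {q : K → L}
    (η θ : FiberMap q q) (h : θ.rng = η.src) : FiberMap q q where
  src := θ.src
  rng := η.rng
  toFun x := η.toFun ⟨θ.toFun x, (θ.maps_to x).trans h⟩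
  maps_to x := η.maps_to _
  continuous_toFun := η.continuous_toFun.comp
    (θ.continuous_toFun.subtype_mk fun x => (θ.maps_to x).trans h)

/-- A set of fiber maps is a subsemigroupoid if it is closed under composition of
composable elements. -/
def IsSubsemigroupoid {K L : Type} [TopologicalSpace K] {q : K → L}
    (S : Set (FiberMap q q)) : Prop :=
  ∀ θ ∈ S, ∀ η ∈ S, ∀ h : θ.rng = η.src, FiberMap.comp η θ h ∈ S

/-- The set `S(q)` of transition maps `φ_g|_{K_l} : K_l → K_{g•l}`. -/
def transitionSet (G : Type) {K L : Type} [Group G] [TopologicalSpace K]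
    [MulAction G K] [MulAction G L] (q : K → L) : Set (FiberMap q q) :=
  {θ | ∃ g : G, θ.rng = g • θ.src ∧ ∀ x : {x : K // q x = θ.src}, θ.toFun x = g • (x : K)}

/-- The uniform enveloping semigroupoid `E_u(q)`: the smallest subsemigroupoid of
`C_q^q(K,K)` containing `S(q)` that is closed in the compact-open topology. -/
def uniformEnveloping (G : Type) {K L : Type} [Group G] [TopologicalSpace K]
    [MulAction G K] [MulAction G L] (q : K → L) : Set (FiberMap q q) :=
  ⋂₀ {S : Set (FiberMap q q) | transitionSet G q ⊆ S ∧ IsSubsemigroupoid S ∧ IsClosed S}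

/-! The set of `θ` having a two-sided inverse in `E_u(q)` contains the transition maps
(`φ_g⁻¹ = φ_{g⁻¹}`), is closed under composition (`(η ∘ θ)⁻¹ = θ⁻¹ ∘ η⁻¹`), and is closed: it is
the projection, along the compact factor `E_u(q)`, of the set of mutually inverse pairs, which is
closed in `C_q^q(K,K)²` because `q` is open. By minimality it contains `E_u(q)`. Inverses are
unique, so inversion has closed graph in the compact space `E_u(q)`, hence is continuous. -/

theorem IsCompact.isClosed_setOf_exists_mem {X Y : Type*} [TopologicalSpace X]
    [TopologicalSpace Y] {k : Set Y} (hk : IsCompact k) {R : Set (X × Y)} (hR : IsClosed R) :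
    IsClosed {x | ∃ y ∈ k, (x, y) ∈ R} := by
  have : CompactSpace k := isCompact_iff_compactSpace.1 hk
  have hproj : {x | ∃ y ∈ k, (x, y) ∈ R} =
      Prod.fst '' ((fun p : X × k => (p.1, (p.2 : Y))) ⁻¹' R) := by
    ext x
    simp
  rw [hproj]
  exact isClosedMap_fst_of_compactSpace _ (hR.preimage (by fun_prop))

theorem continuous_of_isClosed_graph {X Y : Type*} [TopologicalSpace X] [TopologicalSpace Y]
    [CompactSpace Y] {f : X → Y} (hf : IsClosed {p : X × Y | f p.1 = p.2}) : Continuous f := by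
  refine continuous_iff_isClosed.2 fun C hC => ?_
  convert hC.isCompact.isClosed_setOf_exists_mem hf
  ext
  simp

namespace FiberMap

section Topology

variable {X L Y L' : Type} [TopologicalSpace X] [TopologicalSpace Y] {p : X → L} {q : Y → L'}

theorem isOpen_setOf_mapsTo {C : Set X} {O : Set Y} (hC : IsCompact C) (hO : IsOpen O) :
    IsOpen {θ : FiberMap p q | ∀ x : {x : X // p x = θ.src}, (x : X) ∈ C → θ.toFun x ∈ O} :=
  TopologicalSpace.isOpen_generateFrom_of_mem ⟨C, O, hC, hO, rfl⟩

variable [CompactSpace X]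

theorem continuous_src [TopologicalSpace L] (hp : Continuous p) (hps : Surjective p) :
    Continuous (src : FiberMap p q → L) := by
  refine continuous_def.2 fun V hV => ?_
  -- `θ.src ∉ V` iff the (nonempty) fiber over `θ.src` meets the compact set `p⁻¹' Vᶜ`
  convert isOpen_setOf_mapsTo (p := p) (q := q)
    (hV.isClosed_compl.preimage hp).isCompact isOpen_empty using 1
  ext θ
  obtain ⟨x, hx⟩ := hps θ.src
  refine ⟨fun (h : θ.src ∈ V) x' hx' => ?_, fun h => ?_⟩
  · rw [mem_preimage, mem_compl_iff, x'.2] at hx'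
    exact hx' h
  · by_contra hV'
    exact h ⟨x, hx⟩ (by rwa [mem_preimage, hx])

theorem continuous_rng [TopologicalSpace L'] (hps : Surjective p) (hq : Continuous q) :
    Continuous (rng : FiberMap p q → L') := by
  refine continuous_def.2 fun V hV => ?_
  convert isOpen_setOf_mapsTo (p := p) (q := q) isCompact_univ (hV.preimage hq) using 1
  ext θ
  obtain ⟨x, hx⟩ := hps θ.src
  refine ⟨fun (h : θ.rng ∈ V) x' _ => ?_, fun h => ?_⟩
  · rwa [mem_preimage, θ.maps_to x']
  · rw [mem_preimage, ← θ.maps_to ⟨x, hx⟩]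
    exact h ⟨x, hx⟩ trivial

end Topology

variable {K L : Type} [TopologicalSpace K] {q : K → L}

theorem ext_of_apply {θ η : FiberMap q q} (hs : θ.src = η.src) (hr : θ.rng = η.rng)
    (h : ∀ x : {x : K // q x = θ.src}, θ.toFun x = η.toFun ⟨x, hs ▸ x.2⟩) : θ = η := by
  cases θ
  cases η
  dsimp only at hs hr h
  subst hs hr
  congr
  exact funext h

structure LeftInverse (η θ : FiberMap q q) : Prop where
  src_eq : η.src = θ.rng
  rng_eq : η.rng = θ.src
  apply_apply : ∀ (x : {x : K // q x = θ.src}) (h : q (θ.toFun x) = η.src),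
    η.toFun ⟨θ.toFun x, h⟩ = x

def IsInverse (η θ : FiberMap q q) : Prop :=
  LeftInverse η θ ∧ LeftInverse θ η

theorem IsInverse.symm {η θ : FiberMap q q} (h : IsInverse η θ) : IsInverse θ η :=
  ⟨h.2, h.1⟩

theorem LeftInverse.comp {η₁ θ₁ η₂ θ₂ : FiberMap q q} (h₁ : LeftInverse η₁ θ₁)
    (h₂ : LeftInverse η₂ θ₂) (hθ : θ₁.rng = θ₂.src) (hη : η₂.rng = η₁.src) :
    LeftInverse (comp η₁ η₂ hη) (comp θ₂ θ₁ hθ) := by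
  refine ⟨h₂.src_eq, h₁.rng_eq, fun x h => ?_⟩
  have hx : q (θ₁.toFun x) = η₁.src := (θ₁.maps_to x).trans h₁.src_eq.symm
  calc η₁.toFun ⟨η₂.toFun ⟨θ₂.toFun ⟨θ₁.toFun x, _⟩, h⟩, _⟩ = η₁.toFun ⟨θ₁.toFun x, hx⟩ :=
        congrArg η₁.toFun (Subtype.ext (h₂.apply_apply _ h))
    _ = x := h₁.apply_apply x hx

theorem LeftInverse.eq_rightInverse {η η' θ : FiberMap q q} (h : LeftInverse η θ)
    (h' : LeftInverse θ η') : η = η' := by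
  have hs : η.src = η'.src := h.src_eq.trans h'.rng_eq
  refine ext_of_apply hs (h.rng_eq.trans h'.src_eq) fun y => ?_
  have hy : q (η'.toFun ⟨y, hs ▸ y.2⟩) = θ.src := (η'.maps_to _).trans h'.src_eq.symm
  calc η.toFun y
      = η.toFun ⟨θ.toFun ⟨η'.toFun ⟨y, hs ▸ y.2⟩, hy⟩, (θ.maps_to _).trans h.src_eq.symm⟩ :=
        congrArg η.toFun (Subtype.ext (h'.apply_apply ⟨y, hs ▸ y.2⟩ hy).symm)
    _ = η'.toFun ⟨y, hs ▸ y.2⟩ := h.apply_apply _ _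

theorem IsInverse.unique {η η' θ : FiberMap q q} (h : IsInverse η θ) (h' : IsInverse η' θ) :
    η = η' :=
  h.1.eq_rightInverse h'.2

theorem exists_compact_mem_nhds_mapsTo [LocallyCompactSpace K] (θ : FiberMap q q)
    (x : {x : K // q x = θ.src}) {O U : Set K} (hO : O ∈ 𝓝 (θ.toFun x)) (hU : U ∈ 𝓝 (x : K)) :
    ∃ C ∈ 𝓝 (x : K), IsCompact C ∧ C ⊆ U ∧
      ∀ x' : {x : K // q x = θ.src}, (x' : K) ∈ C → θ.toFun x' ∈ O := by
  obtain ⟨u, hu, hsub⟩ := (mem_nhds_subtype _ _ _).1 (θ.continuous_toFun.continuousAt hO)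
  obtain ⟨C, hC, hCsub, hCc⟩ := local_compact_nhds (inter_mem hu hU)
  exact ⟨C, hC, hCc, fun _ h => (hCsub h).2, fun x' hx' => hsub (hCsub hx').1⟩

variable [CompactSpace K] [T2Space K] [TopologicalSpace L]

/-- Separate `η (θ x)` from `x` and shrink to compact neighbourhoods `C` of `x` and `D` of `θ x`;
openness of `q` makes every nearby source fiber meet `C`. -/
theorem eventually_not_leftInverse (hq : Continuous q) (hqs : Surjective q) (hqo : IsOpenMap q)
    {θ η : FiberMap q q} (x : {x : K // q x = θ.src}) (h : q (θ.toFun x) = η.src)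
    (hne : η.toFun ⟨θ.toFun x, h⟩ ≠ x) :
    ∀ᶠ p : FiberMap q q × FiberMap q q in 𝓝 (θ, η), ¬ LeftInverse p.2 p.1 := by
  obtain ⟨O₁, O₂, hO₁, hO₂, hzO₁, hxO₂, hdisj⟩ := t2_separation hne
  obtain ⟨D, hD, hDc, -, hηD⟩ :=
    η.exists_compact_mem_nhds_mapsTo ⟨_, h⟩ (hO₁.mem_nhds hzO₁) univ_mem
  obtain ⟨C, hC, hCc, hCO₂, hθC⟩ :=
    θ.exists_compact_mem_nhds_mapsTo x (interior_mem_nhds.2 hD) (hO₂.mem_nhds hxO₂)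
  have hθ : ∀ᶠ θ' : FiberMap q q in 𝓝 θ,
      (∀ x' : {x : K // q x = θ'.src}, (x' : K) ∈ C → θ'.toFun x' ∈ interior D) ∧
        θ'.src ∈ q '' C :=
    ((isOpen_setOf_mapsTo hCc isOpen_interior).eventually_mem hθC).and
      ((continuous_src hq hqs).continuousAt.preimage_mem_nhds (x.2 ▸ hqo.image_mem_nhds hC))
  have hη : ∀ᶠ η' : FiberMap q q in 𝓝 η,
      ∀ y : {x : K // q x = η'.src}, (y : K) ∈ D → η'.toFun y ∈ O₁ :=
    (isOpen_setOf_mapsTo hDc hO₁).eventually_mem hηD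
  filter_upwards [prod_mem_nhds hθ hη] with ⟨θ', η'⟩ ⟨⟨hθ'C, x₀, hx₀C, hx₀⟩, hη'D⟩ hinv
  have hy₀ : q (θ'.toFun ⟨x₀, hx₀⟩) = η'.src := (θ'.maps_to _).trans hinv.src_eq.symm
  have hmem : η'.toFun ⟨θ'.toFun ⟨x₀, hx₀⟩, hy₀⟩ ∈ O₁ :=
    hη'D _ (interior_subset (hθ'C ⟨x₀, hx₀⟩ hx₀C))
  rw [hinv.apply_apply ⟨x₀, hx₀⟩ hy₀] at hmem
  exact hdisj.ne_of_mem hmem (hCO₂ hx₀C) rfl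

variable [T2Space L]

theorem isClosed_setOf_leftInverse (hq : Continuous q) (hqs : Surjective q) (hqo : IsOpenMap q) :
    IsClosed {p : FiberMap q q × FiberMap q q | LeftInverse p.2 p.1} := by
  have hsrc := continuous_src (q := q) hq hqs
  have hrng := continuous_rng (p := q) hqs hq
  refine isOpen_compl_iff.1 (isOpen_iff_eventually.2 fun ⟨θ, η⟩ hp => ?_)
  by_cases hs : η.src = θ.rng
  · by_cases hr : η.rng = θ.src
    · obtain ⟨x, h, hne⟩ : ∃ x h, η.toFun ⟨θ.toFun x, h⟩ ≠ x := by
        by_contra! H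
        exact hp ⟨hs, hr, H⟩
      exact eventually_not_leftInverse hq hqs hqo x h hne
    · exact ((isClosed_eq (hrng.comp continuous_snd) (hsrc.comp continuous_fst)).isOpen_compl
        |>.eventually_mem hr).mono fun _ hne hinv => hne hinv.rng_eq
  · exact ((isClosed_eq (hsrc.comp continuous_snd) (hrng.comp continuous_fst)).isOpen_compl
      |>.eventually_mem hs).mono fun _ hne hinv => hne hinv.src_eq

theorem isClosed_setOf_isInverse (hq : Continuous q) (hqs : Surjective q) (hqo : IsOpenMap q) :
    IsClosed {p : FiberMap q q × FiberMap q q | IsInverse p.2 p.1} :=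
  (isClosed_setOf_leftInverse hq hqs hqo).inter
    ((isClosed_setOf_leftInverse hq hqs hqo).preimage continuous_swap)

end FiberMap


theorem transitionSet_subset_uniformEnveloping (G : Type) {K L : Type} [Group G]
    [TopologicalSpace K] [MulAction G K] [MulAction G L] (q : K → L) :
    transitionSet G q ⊆ uniformEnveloping G q :=
  subset_sInter fun _ hS => hS.1

theorem uniformEnveloping_subset (G : Type) {K L : Type} [Group G] [TopologicalSpace K]
    [MulAction G K] [MulAction G L] {q : K → L} {S : Set (FiberMap q q)}
    (hT : transitionSet G q ⊆ S) (hS : IsSubsemigroupoid S) (hc : IsClosed S) :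
    uniformEnveloping G q ⊆ S :=
  sInter_subset_of_mem ⟨hT, hS, hc⟩

theorem isSubsemigroupoid_uniformEnveloping (G : Type) {K L : Type} [Group G]
    [TopologicalSpace K] [MulAction G K] [MulAction G L] (q : K → L) :
    IsSubsemigroupoid (uniformEnveloping G q) := fun θ hθ η hη h S hS =>
  hS.2.1 θ (hθ S hS) η (hη S hS) h

namespace FiberMap

variable {K L : Type} [TopologicalSpace K] {q : K → L}

theorem exists_isInverse_mem_transitionSet {G : Type} [Group G] [MulAction G K] [MulAction G L]
    [ContinuousConstSMul G K] (heq : ∀ (g : G) (x : K), q (g • x) = g • q x)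
    {θ : FiberMap q q} (hθ : θ ∈ transitionSet G q) :
    ∃ η ∈ transitionSet G q, IsInverse η θ := by
  obtain ⟨g, hg, hθg⟩ := hθ
  have hsrc : g⁻¹ • θ.rng = θ.src := by rw [hg, inv_smul_smul]
  refine ⟨⟨θ.rng, g⁻¹ • θ.rng, fun y => g⁻¹ • (y : K), fun y => by rw [heq, y.2],
    continuous_subtype_val.const_smul _⟩, ⟨g⁻¹, rfl, fun _ => rfl⟩, ⟨rfl, hsrc, fun x _ => ?_⟩,
    ⟨hsrc.symm, rfl, fun y h => ?_⟩⟩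
  · change g⁻¹ • θ.toFun x = x
    rw [hθg, inv_smul_smul]
  · change θ.toFun ⟨g⁻¹ • (y : K), h⟩ = y
    rw [hθg, smul_inv_smul]

theorem _root_.IsSubsemigroupoid.setOf_exists_isInverse {S : Set (FiberMap q q)}
    (hS : IsSubsemigroupoid S) : IsSubsemigroupoid {θ | ∃ η ∈ S, IsInverse η θ} := by
  rintro θ ⟨θ', hθ'S, hθ'⟩ η ⟨η', hη'S, hη'⟩ h
  have h' : η'.rng = θ'.src := hη'.1.rng_eq.trans (h.symm.trans hθ'.1.src_eq.symm)
  exact ⟨comp θ' η' h', hS η' hη'S θ' hθ'S h', hθ'.1.comp hη'.1 h h', hη'.2.comp hθ'.2 h' h⟩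

variable [CompactSpace K] [T2Space K] [TopologicalSpace L] [T2Space L]

theorem exists_isInverse_mem_uniformEnveloping {G : Type} [Group G] [MulAction G K]
    [MulAction G L] [ContinuousConstSMul G K] (hq : Continuous q) (hqs : Surjective q)
    (hqo : IsOpenMap q) (heq : ∀ (g : G) (x : K), q (g • x) = g • q x)
    (hcomp : IsCompact (uniformEnveloping G q)) :
    ∀ θ ∈ uniformEnveloping G q, ∃ η ∈ uniformEnveloping G q, IsInverse η θ :=
  uniformEnveloping_subset G
    (fun _ hθ => (exists_isInverse_mem_transitionSet heq hθ).imp fun _ hη =>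
      ⟨transitionSet_subset_uniformEnveloping G q hη.1, hη.2⟩)
    (isSubsemigroupoid_uniformEnveloping G q).setOf_exists_isInverse
    (hcomp.isClosed_setOf_exists_mem (isClosed_setOf_isInverse hq hqs hqo))

end FiberMap

theorem statement5_general {G K L : Type} [Group G] [TopologicalSpace G]
    [TopologicalSpace K] [CompactSpace K] [T2Space K]
    [TopologicalSpace L] [T2Space L]
    [MulAction G K] [ContinuousSMul G K] [MulAction G L]
    (q : K → L) (hq : Continuous q) (hqs : Function.Surjective q) (hqo : IsOpenMap q)
    (heq : ∀ (g : G) (x : K), q (g • x) = g • q x)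
    (hcomp : IsCompact (uniformEnveloping G q)) :
    (∀ θ ∈ uniformEnveloping G q, ∃ η ∈ uniformEnveloping G q,
      ∃ (hs : η.src = θ.rng) (hr : η.rng = θ.src),
        (∀ x : {x : K // q x = θ.src},
          η.toFun ⟨θ.toFun x, (θ.maps_to x).trans hs.symm⟩ = (x : K)) ∧
        (∀ y : {y : K // q y = η.src},
          θ.toFun ⟨η.toFun y, (η.maps_to y).trans hr⟩ = (y : K))) ∧
    (∃ inv : {θ : FiberMap q q // θ ∈ uniformEnveloping G q} →
        {θ : FiberMap q q // θ ∈ uniformEnveloping G q},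
      Continuous inv ∧ inv ∘ inv = id ∧
      ∀ θ : {θ : FiberMap q q // θ ∈ uniformEnveloping G q},
        (inv θ).1.src = θ.1.rng ∧ (inv θ).1.rng = θ.1.src ∧
        (∀ (x : {x : K // q x = θ.1.src}) (h : q (θ.1.toFun x) = (inv θ).1.src),
          (inv θ).1.toFun ⟨θ.1.toFun x, h⟩ = (x : K))) := by
  have hE := FiberMap.exists_isInverse_mem_uniformEnveloping hq hqs hqo heq hcomp
  have : CompactSpace (uniformEnveloping G q) := isCompact_iff_compactSpace.1 hcomp
  choose inv hinvE hinv using fun θ : uniformEnveloping G q => hE θ θ.2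
  set ι : uniformEnveloping G q → uniformEnveloping G q := fun θ => ⟨inv θ, hinvE θ⟩
  have hgraph : {p : uniformEnveloping G q × uniformEnveloping G q | ι p.1 = p.2} =
      (fun p => (p.1.1, p.2.1)) ⁻¹' {p | FiberMap.IsInverse p.2 p.1} := by
    ext ⟨θ, η⟩
    exact ⟨fun (h : ι θ = η) => h ▸ hinv θ,
      fun (h : FiberMap.IsInverse η.1 θ.1) => Subtype.ext ((hinv θ).unique h)⟩
  refine ⟨fun θ hθ => ?_, ι, continuous_of_isClosed_graph ?_, funext fun θ => ?_, fun θ => ?_⟩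
  · obtain ⟨η, hη, h⟩ := hE θ hθ
    exact ⟨η, hη, h.1.src_eq, h.1.rng_eq, fun x => h.1.apply_apply x _,
      fun y => h.2.apply_apply y _⟩
  · rw [hgraph]
    exact (FiberMap.isClosed_setOf_isInverse hq hqs hqo).preimage (by fun_prop)
  · exact Subtype.ext ((hinv (ι θ)).unique (hinv θ).symm)
  · exact ⟨(hinv θ).1.src_eq, (hinv θ).1.rng_eq, fun x h => (hinv θ).1.apply_apply x h⟩

/-- If the uniform enveloping semigroupoid `E_u(q)` of an open extension of topological
dynamical systems is compact, then it is a groupoid: every element has a (two-sided)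
inverse in `E_u(q)`, and the inversion map is a homeomorphism of `E_u(q)`. -/
theorem statement5 {G K L : Type} [Group G] [TopologicalSpace G] [IsTopologicalGroup G]
    [T2Space G] [TopologicalSpace K] [CompactSpace K] [T2Space K] [Nonempty K]
    [TopologicalSpace L] [CompactSpace L] [T2Space L] [Nonempty L]
    [MulAction G K] [ContinuousSMul G K] [MulAction G L] [ContinuousSMul G L]
    (q : K → L) (hq : Continuous q) (hqs : Function.Surjective q) (hqo : IsOpenMap q)
    (heq : ∀ (g : G) (x : K), q (g • x) = g • q x)
    (hcomp : IsCompact (uniformEnveloping G q)) :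
    (∀ θ ∈ uniformEnveloping G q, ∃ η ∈ uniformEnveloping G q,
      ∃ (hs : η.src = θ.rng) (hr : η.rng = θ.src),
        (∀ x : {x : K // q x = θ.src},
          η.toFun ⟨θ.toFun x, (θ.maps_to x).trans hs.symm⟩ = (x : K)) ∧
        (∀ y : {y : K // q y = η.src},
          θ.toFun ⟨η.toFun y, (η.maps_to y).trans hr⟩ = (y : K))) ∧
    (∃ inv : {θ : FiberMap q q // θ ∈ uniformEnveloping G q} →
        {θ : FiberMap q q // θ ∈ uniformEnveloping G q},
      Continuous inv ∧ inv ∘ inv = id ∧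
      ∀ θ : {θ : FiberMap q q // θ ∈ uniformEnveloping G q},
        (inv θ).1.src = θ.1.rng ∧ (inv θ).1.rng = θ.1.src ∧
        (∀ (x : {x : K // q x = θ.1.src}) (h : q (θ.1.toFun x) = (inv θ).1.src),
          (inv θ).1.toFun ⟨θ.1.toFun x, h⟩ = (x : K))) :=
  statement5_general q hq hqs hqo heq hcomp
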